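/- Let (Ω, ℱ, ℙ) be a probability space, T > 0, and X : [0,T] → Ω → ℝ a process with X_t measurable and E[|X_t|²] < ∞ for all t ∈ [0,T]. Let m > 0 and η ∈ A(m) with activation function φ. If there exist C > 0 and 0 < α ≤ 1 such that E[|X_t − X_s|²] ≤ C|t − s|^α for all s, t ∈ [0,T], then for every n ≥ 1 and every t ∈ [0,T], E[|S_n(X,t) − X_t|²] ≤ C·(T/n)^α. -/

import Mathlib

open MeasureTheory Filter

def ClassA (m : ℝ) (η : ℝ → ℝ) : Prop :=
  Monotone η ∧ (∀ t : ℝ, m ≤ t → η t = 1) ∧ (∀ t : ℝ, t ≤ -m → η t = 0)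

noncomputable def act (m : ℝ) (η : ℝ → ℝ) (t : ℝ) : ℝ :=
  η (t + m) - η (t - m)

/-- The stochastic interpolation neural network operator (SINNO) with nodes
`t_k = k * (T / n)`, `k = 0, …, n`, and step `δ = T / n`. -/
noncomputable def SINNO {Ω : Type*} (m : ℝ) (η : ℝ → ℝ) (T : ℝ) (n : ℕ)
    (X : ℝ → Ω → ℝ) (t : ℝ) (ω : Ω) : ℝ :=
  ∑ k ∈ Finset.range (n + 1),
    X (k * (T / n)) ω * act m η ((2 * m / (T / n)) * (t - k * (T / n)))

/-- The mean-square modulus of continuity of a stochastic process `X` on `[0, T]`. -/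
noncomputable def msModulus {Ω : Type*} [MeasurableSpace Ω] (P : Measure Ω) (T : ℝ)
    (X : ℝ → Ω → ℝ) (h : ℝ) : ℝ :=
  sSup {e : ℝ | ∃ t ∈ Set.Icc (0 : ℝ) T, ∃ s ∈ Set.Icc (0 : ℝ) T,
    |t - s| ≤ h ∧ e = ∫ ω, (X t ω - X s ω) ^ 2 ∂P}

lemma eta_nonneg {m : ℝ} {η : ℝ → ℝ} (hη : ClassA m η) (s : ℝ) : 0 ≤ η s := by
  rcases le_total s (-m) with h | h
  · rw [hη.2.2 s h]
  · calc (0 : ℝ) = η (-m) := (hη.2.2 _ le_rfl).symm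
      _ ≤ η s := hη.1 h

lemma eta_le_one {m : ℝ} {η : ℝ → ℝ} (hη : ClassA m η) (s : ℝ) : η s ≤ 1 := by
  rcases le_total m s with h | h
  · rw [hη.2.1 s h]
  · calc η s ≤ η m := hη.1 h
      _ = 1 := hη.2.1 _ le_rfl

lemma act_nonneg {m : ℝ} {η : ℝ → ℝ} (hm : 0 ≤ m) (hη : ClassA m η) (x : ℝ) :
    0 ≤ act m η x := by
  have : η (x - m) ≤ η (x + m) := hη.1 (by linarith)
  simp [act]; linarith

lemma act_le_one {m : ℝ} {η : ℝ → ℝ} (hη : ClassA m η) (x : ℝ) :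
    act m η x ≤ 1 := by
  have h1 := eta_le_one hη (x + m)
  have h2 := eta_nonneg hη (x - m)
  simp [act]; linarith

lemma act_eq_zero_right {m : ℝ} {η : ℝ → ℝ} (hm : 0 ≤ m) (hη : ClassA m η) {x : ℝ} (h : 2 * m ≤ x) :
    act m η x = 0 := by
  rw [act, hη.2.1 (x + m) (by linarith), hη.2.1 (x - m) (by linarith), sub_self]

lemma act_eq_zero_left {m : ℝ} {η : ℝ → ℝ} (hm : 0 ≤ m) (hη : ClassA m η) {x : ℝ} (h : x ≤ -(2 * m)) :
    act m η x = 0 := by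
  rw [act, hη.2.2 (x + m) (by linarith), hη.2.2 (x - m) (by linarith), sub_self]

theorem sinno_holder_rate {Ω : Type*} [MeasurableSpace Ω] (P : Measure Ω)
    [IsProbabilityMeasure P] (T : ℝ) (hT : 0 < T) (X : ℝ → Ω → ℝ)
    (hmeas : ∀ s ∈ Set.Icc (0 : ℝ) T, Measurable (X s))
    (hL2 : ∀ s ∈ Set.Icc (0 : ℝ) T, Integrable (fun ω => (X s ω) ^ 2) P)
    (m : ℝ) (hm : 0 < m) (η : ℝ → ℝ) (hη : ClassA m η)
    (C : ℝ) (hC : 0 < C) (α : ℝ) (hα₀ : 0 < α) (hα₁ : α ≤ 1)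
    (hHolder : ∀ s ∈ Set.Icc (0 : ℝ) T, ∀ t ∈ Set.Icc (0 : ℝ) T,
      ∫ ω, (X t ω - X s ω) ^ 2 ∂P ≤ C * |t - s| ^ α)
    (n : ℕ) (hn : 1 ≤ n) (t : ℝ) (ht : t ∈ Set.Icc (0 : ℝ) T) :
    ∫ ω, (SINNO m η T n X t ω - X t ω) ^ 2 ∂P ≤ C * (T / n) ^ α := by
  have hn0 : (0 : ℝ) < (n : ℝ) := by exact_mod_cast hn
  set δ : ℝ := T / n with hδdef
  have hδ : 0 < δ := div_pos hT hn0
  have hnδ : (n : ℝ) * δ = T := by rw [hδdef]; field_simp [hn0.ne']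
  set c : ℝ := 2 * m / δ with hcdef
  have hc : 0 < c := div_pos (by linarith) hδ
  have hcδ : c * δ = 2 * m := by rw [hcdef]; field_simp [hδ.ne']
  set φ : ℕ → ℝ := fun k => act m η (c * (t - k * δ)) with hφdef
  have hφ0 : ∀ k, 0 ≤ φ k := fun k => act_nonneg hm.le hη _
  -- the partition of unity: ∑ φ k = 1
  have hsum : ∑ k ∈ Finset.range (n + 1), φ k = 1 := by
    have key : ∀ k : ℕ, φ k =
        η (c * (t - k * δ) + m) - η (c * (t - (k + 1 : ℕ) * δ) + m) := by
      intro k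
      have : c * (t - k * δ) - m = c * (t - (k + 1 : ℕ) * δ) + m := by
        push_cast; nlinarith [hcδ]
      rw [hφdef]; simp only [act, this]
    calc ∑ k ∈ Finset.range (n + 1), φ k
        = ∑ k ∈ Finset.range (n + 1),
            (η (c * (t - k * δ) + m) - η (c * (t - (k + 1 : ℕ) * δ) + m)) := by
          exact Finset.sum_congr rfl fun k _ => key k
      _ = η (c * (t - (0 : ℕ) * δ) + m) - η (c * (t - (n + 1 : ℕ) * δ) + m) :=
          Finset.sum_range_sub' (fun k => η (c * (t - k * δ) + m)) (n + 1)
      _ = 1 := by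
          have h1 : η (c * (t - (0 : ℕ) * δ) + m) = 1 := by
            apply hη.2.1
            have : 0 ≤ c * t := mul_nonneg hc.le ht.1
            push_cast; nlinarith
          have h2 : η (c * (t - (n + 1 : ℕ) * δ) + m) = 0 := by
            apply hη.2.2
            have ht2 : t - (n + 1 : ℕ) * δ ≤ -δ := by push_cast; nlinarith [ht.2]
            have : c * (t - (n + 1 : ℕ) * δ) ≤ c * (-δ) :=
              mul_le_mul_of_nonneg_left ht2 hc.le
            nlinarith [hcδ]
          rw [h1, h2, sub_zero]
  -- φ k vanishes unless |t - kδ| ≤ δ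
  have hvanish : ∀ k : ℕ, δ < |t - k * δ| → φ k = 0 := by
    intro k hk
    rcases lt_abs.mp hk with h | h
    · apply act_eq_zero_right hm.le hη
      calc 2 * m = c * δ := hcδ.symm
        _ ≤ c * (t - k * δ) := mul_le_mul_of_nonneg_left h.le hc.le
    · apply act_eq_zero_left hm.le hη
      have : c * (t - k * δ) ≤ c * (-δ) :=
        mul_le_mul_of_nonneg_left (by linarith) hc.le
      nlinarith
  have hnode : ∀ k ∈ Finset.range (n + 1), (k : ℝ) * δ ∈ Set.Icc (0 : ℝ) T := by
    intro k hk
    have hk' : (k : ℝ) ≤ n := by exact_mod_cast Nat.lt_succ_iff.mp (Finset.mem_range.mp hk)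
    refine ⟨by positivity, ?_⟩
    calc (k : ℝ) * δ ≤ n * δ := mul_le_mul_of_nonneg_right hk' hδ.le
      _ = T := hnδ
  have hdiff_int : ∀ s ∈ Set.Icc (0 : ℝ) T,
      Integrable (fun ω => (X s ω - X t ω) ^ 2) P := by
    intro s hs
    refine Integrable.mono' (((hL2 s hs).const_mul 2).add ((hL2 t ht).const_mul 2)) ?_ ?_
    · exact (((hmeas s hs).sub (hmeas t ht)).pow_const 2).aestronglyMeasurable
    · filter_upwards with ω
      simp only [Pi.add_apply]
      rw [Real.norm_eq_abs, abs_of_nonneg (sq_nonneg _)]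
      nlinarith [sq_nonneg (X s ω + X t ω)]
  have hpt : ∀ ω, (SINNO m η T n X t ω - X t ω) ^ 2 ≤
      ∑ k ∈ Finset.range (n + 1), φ k * (X (k * δ) ω - X t ω) ^ 2 := by
    intro ω
    have hrepr : SINNO m η T n X t ω - X t ω =
        ∑ k ∈ Finset.range (n + 1), (X (k * δ) ω - X t ω) * φ k := by
      have h1 : ∑ k ∈ Finset.range (n + 1), (X (k * δ) ω - X t ω) * φ k
          = (∑ k ∈ Finset.range (n + 1), X (k * δ) ω * φ k)
            - X t ω * ∑ k ∈ Finset.range (n + 1), φ k := by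
        rw [Finset.mul_sum, ← Finset.sum_sub_distrib]
        exact Finset.sum_congr rfl fun k _ => by ring
      have h2 : SINNO m η T n X t ω = ∑ k ∈ Finset.range (n + 1), X (k * δ) ω * φ k := rfl
      rw [h1, hsum, mul_one, h2]
    rw [hrepr]
    calc (∑ k ∈ Finset.range (n + 1), (X (k * δ) ω - X t ω) * φ k) ^ 2
        ≤ (∑ k ∈ Finset.range (n + 1), φ k) *
            ∑ k ∈ Finset.range (n + 1), φ k * (X (k * δ) ω - X t ω) ^ 2 := by
          refine Finset.sum_sq_le_sum_mul_sum_of_sq_eq_mul _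
            (fun k _ => hφ0 k) (fun k _ => mul_nonneg (hφ0 k) (sq_nonneg _)) ?_
          intro k _; ring
      _ = ∑ k ∈ Finset.range (n + 1), φ k * (X (k * δ) ω - X t ω) ^ 2 := by
          rw [hsum, one_mul]
  have hint_rhs : Integrable
      (fun ω => ∑ k ∈ Finset.range (n + 1), φ k * (X (k * δ) ω - X t ω) ^ 2) P :=
    integrable_finset_sum _ fun k hk => (hdiff_int _ (hnode k hk)).const_mul _
  calc ∫ ω, (SINNO m η T n X t ω - X t ω) ^ 2 ∂P
      ≤ ∫ ω, ∑ k ∈ Finset.range (n + 1), φ k * (X (k * δ) ω - X t ω) ^ 2 ∂P := by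
        apply integral_mono_of_nonneg
        · filter_upwards with ω; positivity
        · exact hint_rhs
        · filter_upwards with ω; exact hpt ω
    _ = ∑ k ∈ Finset.range (n + 1), φ k * ∫ ω, (X (k * δ) ω - X t ω) ^ 2 ∂P := by
        rw [integral_finset_sum _ fun k hk => (hdiff_int _ (hnode k hk)).const_mul _]
        exact Finset.sum_congr rfl fun k hk => integral_const_mul _ _
    _ ≤ ∑ k ∈ Finset.range (n + 1), φ k * (C * δ ^ α) := by
        apply Finset.sum_le_sum
        intro k hk
        by_cases h : φ k = 0
        · rw [h, zero_mul, zero_mul]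
        · have hkδ : |t - k * δ| ≤ δ := le_of_not_gt fun hlt => h (hvanish k hlt)
          have h1 := hHolder t ht ((k : ℝ) * δ) (hnode k hk)
          rw [abs_sub_comm] at h1
          have h2 : |t - k * δ| ^ α ≤ δ ^ α :=
            Real.rpow_le_rpow (abs_nonneg _) hkδ hα₀.le
          calc φ k * ∫ ω, (X (k * δ) ω - X t ω) ^ 2 ∂P
              ≤ φ k * (C * |t - k * δ| ^ α) := mul_le_mul_of_nonneg_left h1 (hφ0 k)
            _ ≤ φ k * (C * δ ^ α) :=
                mul_le_mul_of_nonneg_left (by nlinarith) (hφ0 k)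
    _ = C * δ ^ α := by rw [← Finset.sum_mul, hsum, one_mul]
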